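/- Let Q be a real n×n matrix and set 𝒢 := −2EQE + P. Let a, b, c ∈ ℝⁿ satisfy a_k + b_k + c_k = π for every k ∈ {1,…,n}, let v ∈ ℝⁿ be defined by v_k = b_k for k ≤ n₊ and v_k = c_k for k > n₊, and suppose w ∈ ℝⁿ satisfies 𝒢a + v = w. Define Γ ∈ ℝⁿ by Γ_k = ε_k(a_k − π) and set 𝒲 := 2QΓ + c. Then −E𝒲 = w − 𝒢·π𝟙. In particular, 𝒲 is determined by Q, E, P and the vector w alone, and does not otherwise depend on (a, b, c). -/
import Mathlib


open Matrix Real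

/-- Matrix form of Lemma 3.1 (computeW): with `𝒢 = -2 E Q E + P`,
angles `a,b,c` with `a_k + b_k + c_k = π`, `v` the (b on positive, c on negative)
vector, `w = 𝒢 a + v`, `Γ_k = ε_k (a_k - π)` and `𝒲 = 2 Q Γ + c`, one has
`-E 𝒲 = w - 𝒢 π 𝟙`. -/
theorem stmt_0 (nP nN : ℕ) (hn : 1 ≤ nP + nN)
    (Q : Matrix (Fin (nP + nN)) (Fin (nP + nN)) ℝ)
    (ε : Fin (nP + nN) → ℝ)
    (hε : ∀ k : Fin (nP + nN), ε k = if (k : ℕ) < nP then 1 else -1)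
    (E P' 𝒢 : Matrix (Fin (nP + nN)) (Fin (nP + nN)) ℝ)
    (hE : E = Matrix.diagonal ε)
    (hP : P' = Matrix.diagonal fun k => max (ε k) 0)
    (h𝒢 : 𝒢 = (-2 : ℝ) • (E * Q * E) + P')
    (a b c v w : Fin (nP + nN) → ℝ)
    (habc : ∀ k, a k + b k + c k = π)
    (hv : ∀ k : Fin (nP + nN), v k = if (k : ℕ) < nP then b k else c k)
    (hw : 𝒢.mulVec a + v = w)
    (Γ 𝒲 : Fin (nP + nN) → ℝ)
    (hΓ : ∀ k, Γ k = ε k * (a k - π))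
    (h𝒲 : 𝒲 = (2 : ℝ) • Q.mulVec Γ + c) :
    -(E.mulVec 𝒲) = w - 𝒢.mulVec (fun _ => π) := by
  set d : Fin (nP + nN) → ℝ := a - (fun _ => π) with hd
  have hΓ' : Γ = E.mulVec d := by
    funext k
    simp [hE, Matrix.mulVec_diagonal, hΓ, hd]
  have key : -(P'.mulVec d) - E.mulVec c = v := by
    funext k
    simp only [hP, hE, Matrix.mulVec_diagonal, Pi.sub_apply, Pi.neg_apply, hv, hε, hd]
    by_cases h : (k : ℕ) < nP
    · simp only [if_pos h]
      norm_num
      linarith [habc k]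
    · simp only [if_neg h]
      norm_num
  calc -(E.mulVec 𝒲)
      = (-2 : ℝ) • (E * Q * E).mulVec d + (-(P'.mulVec d) - E.mulVec c) +
          P'.mulVec d := by
        rw [h𝒲, hΓ']
        simp [Matrix.mulVec_add, Matrix.mulVec_smul, ← Matrix.mulVec_mulVec]
        module
    _ = 𝒢.mulVec d + v := by
        rw [key, h𝒢]
        simp only [Matrix.add_mulVec, Matrix.smul_mulVec, neg_smul,
          Matrix.neg_mulVec]
        abel
    _ = w - 𝒢.mulVec (fun _ => π) := by
        rw [← hw, hd, Matrix.mulVec_sub]; abel
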